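/- Let Δ be a bounded, co-bounded m-invariant set and w ∈ [m]^n with w · Δ = Δ + n. Then at each step i, the element removed from Δ^{(i)} = w_{i-1} ⋯ w_0 · Δ by the letter w_i is an n-generator of Δ^{(i)}, i.e., the removed element x satisfies x − n ∉ Δ^{(i)}. -/

import Mathlib

/-- The shift of a set of integers: `Δ + k`. -/
def shiftSet (Δ : Set ℤ) (k : ℤ) : Set ℤ := (· + k) '' Δ

/-- `Δ` is `k`-invariant if `Δ + k ⊆ Δ`. -/
def Invariant (k : ℤ) (Δ : Set ℤ) : Prop := shiftSet Δ k ⊆ Δ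

/-- `Δ` is bounded (has a minimum element). -/
def HasMin (Δ : Set ℤ) : Prop := ∃ a ∈ Δ, ∀ x ∈ Δ, a ≤ x

/-- `Δ` is co-bounded: contains all sufficiently large integers. -/
def CoBounded (Δ : Set ℤ) : Prop := ∃ N : ℤ, ∀ x : ℤ, N ≤ x → x ∈ Δ

/-- The `k`-generators of `Δ`: elements `a ∈ Δ` with `a - k ∉ Δ`, i.e. `Δ \ (Δ + k)`. -/
def gens (k : ℤ) (Δ : Set ℤ) : Set ℤ := Δ \ shiftSet Δ k

/-- The `(j+1)`-st smallest element of a set of integers. -/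
noncomputable def nthSmallest : ℕ → Set ℤ → ℤ
  | 0, S => sInf S
  | j+1, S => nthSmallest j (S \ {sInf S})

/-- The letter `j ∈ [m]` acts on an `m`-invariant set by removing its `(j+1)`-st
smallest `m`-generator. -/
noncomputable def letterAct (m : ℤ) (j : ℕ) (Δ : Set ℤ) : Set ℤ :=
  Δ \ {nthSmallest j (gens m Δ)}

/-- `steps m p Δ i = p_{i-1} ⋯ p_1 p_0 ⋅ Δ`: the word acts one letter at a
time, the letter `p 0` (rightmost) acting first. -/
noncomputable def steps (m : ℤ) (p : ℕ → ℕ) (Δ : Set ℤ) : ℕ → Set ℤ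
  | 0 => Δ
  | i+1 => letterAct m (p i) (steps m p Δ i)

/-!
The `i`-th letter removes an element `x` of `Δ^{(i)}`, so `x` lies in none of the later sets,
in particular `x ∉ Δ^{(n)} = Δ + n`, i.e. `x - n ∉ Δ ⊇ Δ^{(i)}`. What has to be checked is that
the letter really removes an element: `Δ^{(i)}` is bounded below and co-bounded, so it has finitely
many `m`-generators, and at least `m` of them (the least element of each residue class mod `m`),
so the `(w_i + 1)`-st smallest one exists.
-/

lemma mem_shiftSet {Δ : Set ℤ} {k x : ℤ} : x ∈ shiftSet Δ k ↔ x - k ∈ Δ := by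
  constructor
  · rintro ⟨a, ha, rfl⟩
    simpa using ha
  · intro h
    exact ⟨x - k, h, by ring⟩

lemma HasMin.bddBelow {Δ : Set ℤ} (h : HasMin Δ) : BddBelow Δ :=
  let ⟨a, _, ha⟩ := h
  ⟨a, ha⟩

lemma CoBounded.diff_singleton {Δ : Set ℤ} (h : CoBounded Δ) (a : ℤ) : CoBounded (Δ \ {a}) := by
  obtain ⟨N, hN⟩ := h
  refine ⟨max N (a + 1), fun x hx => ⟨hN x (le_of_max_le_left hx), ?_⟩⟩
  have := le_of_max_le_right hx
  simp only [Set.mem_singleton_iff]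
  omega

lemma nthSmallest_mem : ∀ (j : ℕ) {S : Set ℤ}, S.Finite → j < S.ncard → nthSmallest j S ∈ S
  | 0, S, hS, hj => Int.csInf_mem (Set.nonempty_of_ncard_ne_zero (by omega)) hS.bddBelow
  | j + 1, S, hS, hj => by
    have hmin : sInf S ∈ S := Int.csInf_mem (Set.nonempty_of_ncard_ne_zero (by omega)) hS.bddBelow
    have hcard := Set.ncard_sdiff_singleton_of_mem hmin
    exact (nthSmallest_mem j hS.sdiff (by omega)).1

section Generators

variable {m : ℤ} {Δ : Set ℤ}

lemma gens_finite (hb : BddBelow Δ) (hc : CoBounded Δ) : (gens m Δ).Finite := by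
  obtain ⟨a, ha⟩ := hb
  obtain ⟨N, hN⟩ := hc
  refine (Set.finite_Icc a (N + m)).subset fun x ⟨hx, hxm⟩ => ⟨ha hx, ?_⟩
  by_contra h
  exact hxm (mem_shiftSet.2 (hN _ (by omega)))

lemma exists_mem_gens_emod_eq (hm : 0 < m) (hb : BddBelow Δ) (hc : CoBounded Δ) {r : ℤ}
    (hr₀ : 0 ≤ r) (hrm : r < m) : ∃ x ∈ gens m Δ, x % m = r := by
  obtain ⟨a, ha⟩ := hb
  obtain ⟨N, hN⟩ := hc
  have hclass : ∃ x, x ∈ Δ ∧ x % m = r := by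
    refine ⟨r + m * |N|, hN _ ?_, ?_⟩
    · nlinarith [le_abs_self N, abs_nonneg N]
    · rw [Int.add_mul_emod_self_left, Int.emod_eq_of_lt hr₀ hrm]
  obtain ⟨x, ⟨hxΔ, hxr⟩, hleast⟩ :=
    Int.exists_least_of_bdd ⟨a, fun z hz => ha hz.1⟩ hclass
  refine ⟨x, ⟨hxΔ, fun hx => ?_⟩, hxr⟩
  have := hleast (x - m) ⟨mem_shiftSet.1 hx, by rwa [Int.sub_emod_right]⟩
  omega

lemma le_ncard_gens {m : ℕ} (hm : 0 < m) (hb : BddBelow Δ) (hc : CoBounded Δ) :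
    m ≤ (gens m Δ).ncard := by
  have hfin : (gens m Δ).Finite := gens_finite hb hc
  calc m = (Set.Ico (0 : ℤ) m).ncard := by
        rw [← Finset.coe_Ico, Set.ncard_coe_finset, Int.card_Ico, sub_zero, Int.toNat_natCast]
    _ ≤ ((· % (m : ℤ)) '' gens m Δ).ncard := by
        refine Set.ncard_le_ncard (fun r ⟨hr₀, hrm⟩ => ?_) (hfin.image _)
        exact exists_mem_gens_emod_eq (by exact_mod_cast hm) hb hc hr₀ hrm
    _ ≤ (gens m Δ).ncard := Set.ncard_image_le hfin

lemma nthSmallest_gens_mem {m : ℕ} {j : ℕ} (hj : j < m) (hb : BddBelow Δ) (hc : CoBounded Δ) :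
    nthSmallest j (gens m Δ) ∈ gens m Δ :=
  nthSmallest_mem j (gens_finite hb hc) (hj.trans_le (le_ncard_gens (by omega) hb hc))

end Generators

section Steps

variable (m : ℤ) (p : ℕ → ℕ) (Δ : Set ℤ)

lemma steps_antitone : Antitone (steps m p Δ) :=
  antitone_nat_of_succ_le fun _ => Set.sdiff_subset

lemma steps_subset (i : ℕ) : steps m p Δ i ⊆ Δ :=
  steps_antitone m p Δ (Nat.zero_le i)

lemma coBounded_steps {Δ : Set ℤ} (hc : CoBounded Δ) : ∀ i, CoBounded (steps m p Δ i)
  | 0 => hc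
  | i + 1 => (coBounded_steps hc i).diff_singleton _

lemma nthSmallest_not_mem_steps {i k : ℕ} (hik : i < k) :
    nthSmallest (p i) (gens m (steps m p Δ i)) ∉ steps m p Δ k :=
  fun h => (steps_antitone m p Δ hik h).2 rfl

end Steps

theorem removed_is_n_generator_general (m n : ℕ) (Δ : Set ℤ)
    (hb : HasMin Δ) (hc : CoBounded Δ)
    (p : ℕ → ℕ) (hp : ∀ i < n, p i < m)
    (hact : steps m p Δ n = shiftSet Δ n) :
    ∀ i < n,
      nthSmallest (p i) (gens m (steps m p Δ i)) ∈ steps m p Δ i ∧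
      nthSmallest (p i) (gens m (steps m p Δ i)) - n ∉ steps m p Δ i := by
  intro i hi
  have hgen : nthSmallest (p i) (gens m (steps m p Δ i)) ∈ gens m (steps m p Δ i) :=
    nthSmallest_gens_mem (hp i hi) (hb.bddBelow.mono (steps_subset m p Δ i))
      (coBounded_steps m p hc i)
  refine ⟨hgen.1, fun hx => ?_⟩
  have hgone := nthSmallest_not_mem_steps m p Δ hi
  rw [hact] at hgone
  exact hgone (mem_shiftSet.2 (steps_subset m p Δ i hx))

/-- If `w ⋅ Δ = Δ + n`, then at each step the element removed from
`Δ^{(i)} = w_{i-1} ⋯ w_0 ⋅ Δ` by the letter `w_i` is an `n`-generator of `Δ^{(i)}`. -/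
theorem removed_is_n_generator (m n : ℕ) (hm : 0 < m) (hn : 0 < n) (Δ : Set ℤ)
    (hI : Invariant m Δ) (hb : HasMin Δ) (hc : CoBounded Δ)
    (p : ℕ → ℕ) (hp : ∀ i < n, p i < m)
    (hact : steps m p Δ n = shiftSet Δ n) :
    ∀ i < n,
      nthSmallest (p i) (gens m (steps m p Δ i)) ∈ steps m p Δ i ∧
      nthSmallest (p i) (gens m (steps m p Δ i)) - n ∉ steps m p Δ i :=
  removed_is_n_generator_general m n Δ hb hc p hp hact
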